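/- arXiv:2506.21936 — 6 statements merged into one kernel-verified Lean document; each statement's English description precedes it below -/
import Mathlib

section
/- Let q be a prime power and m a positive integer. Let L(x) ∈ F_{q^m}[x] be a q-linearized polynomial that is an n-cycle permutation of F_{q^m} (L^(n) = identity), let h(x) ∈ F_q[x], and let γ ∈ F_q be nonzero. Suppose F(x) = L(x) + γ·h(Tr_{q^m/q}(x)) satisfies Tr_{q^m/q}(F(x)) = F̄(Tr_{q^m/q}(x)) for all x, where F̄(x) = L(x) + Tr_{q^m/q}(γ)·h(x). Then F is an n-cycle permutation of F_{q^m} if and only if ∑_{i=0}^{n−1} L^(i)(h(F̄^(n−1−i)(y))) = 0 for every y in the image Tr_{q^m/q}(F_{q^m}). -/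
theorem stmt6 (q m n : ℕ) (hq : ∃ p s : ℕ, p.Prime ∧ 0 < s ∧ q = p ^ s)
    (hm : 0 < m) (hn : 0 < n)
    (K : Type) [Field K] [Fintype K] (hK : Fintype.card K = q ^ m)
    (a : ℕ → K) (L : K → K) (hL : ∀ x, L x = ∑ i ∈ Finset.range m, a i * x ^ q ^ i)
    (hLcyc : ∀ x, L^[n] x = x)
    (h : Polynomial K) (hh : ∀ i, (h.coeff i) ^ q = h.coeff i)
    (γ : K) (hγ : γ ≠ 0) (hγq : γ ^ q = γ)
    (Tr : K → K) (hTr : ∀ x, Tr x = ∑ i ∈ Finset.range m, x ^ q ^ i)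
    (F Fbar : K → K)
    (hF : ∀ x, F x = L x + γ * h.eval (Tr x))
    (hFbar : ∀ x, Fbar x = L x + Tr γ * h.eval x)
    (hcomm : ∀ x, Tr (F x) = Fbar (Tr x)) :
    (∀ x, F^[n] x = x) ↔
      ∀ y ∈ Set.range Tr,
        ∑ i ∈ Finset.range n, L^[i] (h.eval (Fbar^[n - 1 - i] y)) = 0 := by
  obtain ⟨p, s, hp, hs, rfl⟩ := hq
  -- characteristic
  haveI : Fact p.Prime := ⟨hp⟩
  haveI charp : CharP K p := by
    have hcard : Fintype.card K = p ^ (s * m) := by rw [hK, pow_mul]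
    haveI : CharP K (ringChar K) := ringChar.charP K
    obtain ⟨n', hp', hcard'⟩ := FiniteField.card K (ringChar K)
    have hdvd : ringChar K ∣ p := by
      have : ringChar K ∣ p ^ (s * m) := by
        rw [← hcard, hcard']
        exact dvd_pow_self _ n'.pos.ne'
      exact hp'.dvd_of_dvd_pow this
    have : ringChar K = p := ((Nat.prime_dvd_prime_iff_eq hp' hp).mp hdvd)
    exact this ▸ ringChar.charP K
  -- Frobenius additivity for q-powers
  have frob : ∀ (i : ℕ) (x y : K), (x + y) ^ (p ^ s) ^ i = x ^ (p ^ s) ^ i + y ^ (p ^ s) ^ i := by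
    intro i x y
    simp only [← pow_mul]
    exact add_pow_char_pow ..
  -- L is additive
  have Ladd : ∀ x y : K, L (x + y) = L x + L y := by
    intro x y
    simp only [hL, ← Finset.sum_add_distrib]
    refine Finset.sum_congr rfl fun i _ => ?_
    rw [frob, mul_add]
  have Lzero : L 0 = 0 := by
    simp only [hL]
    refine Finset.sum_eq_zero fun i _ => ?_
    rw [zero_pow (pow_ne_zero _ (pow_ne_zero _ hp.pos.ne')), mul_zero]
  -- γ is fixed by q-power Frobenius
  have hγpow : ∀ i : ℕ, γ ^ (p ^ s) ^ i = γ := by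
    intro i
    induction i with
    | zero => simp
    | succ i ih => rw [pow_succ, pow_mul, ih, hγq]
  have Lγ : ∀ x : K, L (γ * x) = γ * L x := by
    intro x
    simp only [hL, Finset.mul_sum]
    refine Finset.sum_congr rfl fun i _ => ?_
    rw [mul_pow, hγpow]
    ring
  have Lsum : ∀ (t : Finset ℕ) (g : ℕ → K), L (∑ i ∈ t, g i) = ∑ i ∈ t, L (g i) := by
    intro t g
    induction t using Finset.induction with
    | empty => simpa using Lzero
    | insert _ _ hx ih => rw [Finset.sum_insert hx, Finset.sum_insert hx, Ladd, ih]
  -- Tr commutes with iterates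
  have hTrIter : ∀ (k : ℕ) (x : K), Tr (F^[k] x) = Fbar^[k] (Tr x) := by
    intro k
    induction k with
    | zero => intro x; simp
    | succ k ih =>
      intro x
      rw [Function.iterate_succ_apply', Function.iterate_succ_apply', hcomm, ih]
  -- key iteration formula
  have key : ∀ (k : ℕ) (x : K),
      F^[k] x = L^[k] x + γ * ∑ i ∈ Finset.range k, L^[i] (h.eval (Fbar^[k - 1 - i] (Tr x))) := by
    intro k
    induction k with
    | zero => intro x; simp
    | succ k ih =>
      intro x
      rw [Function.iterate_succ_apply', ih x, hF, Ladd, Lγ, Lsum]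
      have harg : Tr (L^[k] x + γ * ∑ i ∈ Finset.range k,
          L^[i] (h.eval (Fbar^[k - 1 - i] (Tr x)))) = Fbar^[k] (Tr x) := by
        rw [← ih x, hTrIter]
      rw [harg, Function.iterate_succ_apply']
      rw [Finset.sum_range_succ']
      have hterm : ∀ i ∈ Finset.range k,
          L (L^[i] (h.eval (Fbar^[k - 1 - i] (Tr x)))) =
          L^[i + 1] (h.eval (Fbar^[k + 1 - 1 - (i + 1)] (Tr x))) := by
        intro i hi
        have he : k + 1 - 1 - (i + 1) = k - 1 - i := by omega
        rw [he, Function.iterate_succ_apply']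
      rw [Finset.sum_congr rfl hterm]
      simp only [Nat.add_sub_cancel, Nat.sub_zero, Function.iterate_zero, id_eq]
      ring
  constructor
  · intro hid y hy
    obtain ⟨x, rfl⟩ := hy
    have := key n x
    rw [hid x, hLcyc x, left_eq_add] at this
    exact (mul_eq_zero.mp this).resolve_left hγ
  · intro hsum x
    rw [key n x, hLcyc x, hsum (Tr x) ⟨x, rfl⟩, mul_zero, add_zero]
end

section
/- Let G be an n-cycle permutation of F_{2^m}, let f : F_{2^m} → F_2 be a Boolean function with f ∘ G = f, and let γ ∈ F_{2^m} be nonzero. Then the map F(x) = G(x) + γ·f(x) is an n-cycle permutation of F_{2^m} if and only if: (1) γ is a 0-linear structure of f, i.e., f(x) + f(x + γ) = 0 for all x; and (2) G^(n−1)(x + γ) = G(G(⋯G(G(x) + γ) + γ⋯) + γ) + γ (with n−1 applications of G, each followed by adding γ) for every x with f(x) = 1. -/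
theorem stmt8 (m n : ℕ) (hm : 0 < m) (hn : 1 ≤ n)
    (K : Type) [Field K] [Fintype K] (hK : Fintype.card K = 2 ^ m)
    (G : K → K) (hGbij : Function.Bijective G) (hGcyc : ∀ x, G^[n] x = x)
    (f : K → K) (hfbool : ∀ x, f x = 0 ∨ f x = 1) (hfG : ∀ x, f (G x) = f x)
    (γ : K) (hγ : γ ≠ 0) (F : K → K) (hF : ∀ x, F x = G x + γ * f x) :
    (∀ x, F^[n] x = x) ↔
      ((∀ x, f x + f (x + γ) = 0) ∧
       ∀ x, f x = 1 → G^[n - 1] (x + γ) = (fun y => G y + γ)^[n - 1] x) := by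
  -- characteristic 2
  have hadd : ∀ a : K, a + a = 0 := by
    obtain ⟨p, hp⟩ := CharP.exists K
    haveI := hp
    obtain ⟨k, hpp, hcard⟩ := FiniteField.card K p
    have hpd : p ∣ 2 ^ m := by
      rw [← hK, hcard]
      exact dvd_pow_self p k.2.ne'
    have hp2 : p = 2 :=
      (Nat.prime_dvd_prime_iff_eq hpp Nat.prime_two).mp (hpp.dvd_of_dvd_pow hpd)
    intro a
    have h0 : ((p : ℕ) : K) = 0 := CharP.cast_eq_zero K p
    rw [hp2] at h0
    push_cast at h0
    rw [← two_mul, h0, zero_mul]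
  have hn1 : n - 1 + 1 = n := Nat.succ_pred_eq_of_pos hn
  -- iterate lemmas, parameterized by F-invariance of f
  have hiter1 : (∀ x, f (F x) = f x) → ∀ k x, f x = 1 →
      F^[k] x = (fun y => G y + γ)^[k] x := by
    intro hfinv k
    induction k with
    | zero => intro x _; simp
    | succ k ih =>
      intro x hx
      rw [Function.iterate_succ_apply, Function.iterate_succ_apply]
      have hFx : F x = G x + γ := by rw [hF, hx, mul_one]
      rw [ih (F x) (by rw [hfinv, hx]), hFx]
  have hiter0 : (∀ x, f (F x) = f x) → ∀ k x, f x = 0 →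
      F^[k] x = G^[k] x := by
    intro hfinv k
    induction k with
    | zero => intro x _; simp
    | succ k ih =>
      intro x hx
      rw [Function.iterate_succ_apply, Function.iterate_succ_apply]
      have hFx : F x = G x := by rw [hF, hx, mul_zero, add_zero]
      rw [ih (F x) (by rw [hfinv, hx]), hFx]
  constructor
  · intro hFn
    have hFsurj : Function.Surjective F := fun x =>
      ⟨F^[n - 1] x, by
        have := hFn x
        rw [← hn1, Function.iterate_succ_apply'] at this
        exact this⟩
    have hFinj : Function.Injective F := Finite.injective_iff_surjective.mpr hFsurj
    -- f is F-invariant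
    have hfinv : ∀ x, f (F x) = f x := by
      intro x
      rcases hfbool x with h0 | h1
      · rw [hF, h0, mul_zero, add_zero, hfG, h0]
      · rcases hfbool (F x) with hf0 | hf1
        · exfalso
          set e : {z : K // f z = 0} → {z : K // f z = 0} := fun z =>
            ⟨F z.1, by rw [hF, z.2, mul_zero, add_zero, hfG, z.2]⟩ with he
          have heinj : Function.Injective e := fun a b hab => by
            apply Subtype.ext
            exact hFinj (congrArg Subtype.val hab)
          have hesurj := Finite.injective_iff_surjective.mp heinj
          obtain ⟨⟨x0, hx0⟩, hx0eq⟩ := hesurj ⟨F x, hf0⟩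
          have : F x0 = F x := congrArg Subtype.val hx0eq
          have : x0 = x := hFinj this
          rw [this] at hx0
          exact zero_ne_one (hx0.symm.trans h1)
        · rw [hf1, h1]
    -- shift stability on S1
    have hshift1 : ∀ y, f y = 1 → f (y + γ) = 1 := by
      intro y hy
      obtain ⟨x, rfl⟩ := hGbij.surjective y
      have hx : f x = 1 := by rw [← hfG x]; exact hy
      have hFx : F x = G x + γ := by rw [hF, hx, mul_one]
      rw [← hFx, hfinv, hx]
    constructor
    · intro x
      rcases hfbool x with h0 | h1
      · rcases hfbool (x + γ) with ha | ha
        · rw [h0, ha, add_zero]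
        · exfalso
          have := hshift1 (x + γ) ha
          rw [add_assoc, hadd γ, add_zero] at this
          exact zero_ne_one (h0.symm.trans this)
      · rw [h1, hshift1 x h1]
        exact hadd 1
    · intro x hx
      have e1 : (fun y => G y + γ)^[n] x = x := by
        rw [← hiter1 hfinv n x hx]; exact hFn x
      rw [← hn1, Function.iterate_succ_apply'] at e1
      have e2 : G ((fun y => G y + γ)^[n - 1] x) = x + γ := by
        have e1' : G ((fun y => G y + γ)^[n - 1] x) + γ = x := e1
        linear_combination e1' - hadd γ
      have e3 : G (G^[n - 1] (x + γ)) = x + γ := by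
        have := hGcyc (x + γ)
        rw [← hn1, Function.iterate_succ_apply'] at this
        exact this
      exact hGbij.injective (e3.trans e2.symm)
  · rintro ⟨h1, h2⟩ x
    have hshift : ∀ x : K, f (x + γ) = f x := fun x =>
      add_left_cancel ((h1 x).trans (hadd (f x)).symm)
    have hfinv : ∀ x, f (F x) = f x := by
      intro x
      rcases hfbool x with h0 | hx1
      · rw [hF, h0, mul_zero, add_zero, hfG, h0]
      · rw [hF, hx1, mul_one, hshift, hfG, hx1]
    rcases hfbool x with h0 | hx1
    · rw [hiter0 hfinv n x h0]; exact hGcyc x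
    · rw [hiter1 hfinv n x hx1, ← hn1, Function.iterate_succ_apply']
      show G ((fun y => G y + γ)^[n - 1] x) + γ = x
      rw [← h2 x hx1]
      have e3 : G (G^[n - 1] (x + γ)) = x + γ := by
        have := hGcyc (x + γ)
        rw [← hn1, Function.iterate_succ_apply'] at this
        exact this
      rw [e3, add_assoc, hadd γ, add_zero]
end

section
/- Let G be a permutation of F_{2^m}, f a Boolean function on F_{2^m}, and γ ∈ F_{2^m} nonzero. Then S(x) = G(x) + γ·f(x) is a permutation of F_{2^m} if and only if γ is a 0-linear structure of f ∘ G^(−1), i.e., (f∘G^(−1))(x) + (f∘G^(−1))(x + γ) = 0 for all x ∈ F_{2^m}. -/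
theorem stmt9 (m : ℕ) (hm : 0 < m)
    (K : Type) [Field K] [Fintype K] (hK : Fintype.card K = 2 ^ m)
    (G : K ≃ K) (f : K → K) (hfbool : ∀ x, f x = 0 ∨ f x = 1)
    (γ : K) (hγ : γ ≠ 0) :
    Function.Bijective (fun x => G x + γ * f x) ↔
      ∀ x : K, f (G.symm x) + f (G.symm (x + γ)) = 0 := by
  have h2 : (2 : K) = 0 := by
    have hc := Nat.cast_card_eq_zero K
    rw [hK] at hc
    push_cast at hc
    exact pow_eq_zero_iff hm.ne' |>.mp hc
  have hadd : ∀ a : K, a + a = 0 := fun a => by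
    have : (2 : K) * a = 0 := by rw [h2, zero_mul]
    linear_combination this
  constructor
  · intro hS x
    by_contra hne
    have hinj := hS.injective
    rcases hfbool (G.symm x) with h0 | h1 <;> rcases hfbool (G.symm (x + γ)) with h0' | h1'
    · exact hne (by rw [h0, h0', add_zero])
    · have e1 : G (G.symm x) + γ * f (G.symm x) = x := by
        rw [G.apply_symm_apply, h0, mul_zero, add_zero]
      have e2 : G (G.symm (x + γ)) + γ * f (G.symm (x + γ)) = x := by
        rw [G.apply_symm_apply, h1', mul_one, add_assoc, hadd, add_zero]
      have h3 : G.symm x = G.symm (x + γ) := hinj (e1.trans e2.symm)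
      have h4 : x = x + γ := G.symm.injective h3
      exact hγ (by linear_combination h4.symm)
    · have e1 : G (G.symm x) + γ * f (G.symm x) = x + γ := by
        rw [G.apply_symm_apply, h1, mul_one]
      have e2 : G (G.symm (x + γ)) + γ * f (G.symm (x + γ)) = x + γ := by
        rw [G.apply_symm_apply, h0', mul_zero, add_zero]
      have h3 : G.symm x = G.symm (x + γ) := hinj (e1.trans e2.symm)
      have h4 : x = x + γ := G.symm.injective h3
      exact hγ (by linear_combination h4.symm)
    · exact hne (by rw [h1, h1', hadd])
  · intro hlin
    apply Finite.injective_iff_bijective.mp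
    intro a b hab
    simp only at hab
    rcases hfbool a with ha | ha <;> rcases hfbool b with hb | hb
    · rw [ha, hb] at hab
      exact G.injective (by linear_combination hab)
    · -- f a = 0, f b = 1 : G a = G b + γ
      exfalso
      rw [ha, hb, mul_zero, mul_one, add_zero] at hab
      have key := hlin (G b)
      rw [G.symm_apply_apply, hb, ← hab, G.symm_apply_apply, ha, add_zero] at key
      exact one_ne_zero key
    · exfalso
      rw [ha, hb, mul_zero, mul_one, add_zero] at hab
      have key := hlin (G a)
      rw [G.symm_apply_apply, ha, hab, G.symm_apply_apply, hb, add_zero] at key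
      exact one_ne_zero key
    · rw [ha, hb] at hab
      exact G.injective (by linear_combination hab)
end

section
/- Let G be a permutation of F_{2^m}, f a Boolean function on F_{2^m}, and γ ∈ F_{2^m} nonzero. If S(x) = G(x) + γ·f(x) is a permutation of F_{2^m}, then its inverse is S^(−1) = G^(−1) ∘ F, where F(x) = x + γ·f(G^(−1)(x)). -/
theorem stmt10 (m : ℕ) (hm : 0 < m)
    (K : Type) [Field K] [Fintype K] (hK : Fintype.card K = 2 ^ m)
    (G : K ≃ K) (f : K → K) (hfbool : ∀ x, f x = 0 ∨ f x = 1)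
    (γ : K) (hγ : γ ≠ 0)
    (S : K → K) (hS : ∀ x, S x = G x + γ * f x)
    (hSbij : Function.Bijective S) :
    (∀ x, S (G.symm (x + γ * f (G.symm x))) = x) ∧
    (∀ x, G.symm (S x + γ * f (G.symm (S x))) = x) := by
  have hcard : ((Fintype.card K : K)) = 0 := FiniteField.cast_card_eq_zero K
  have h2 : (2 : K) = 0 := by
    by_contra h2
    have : ((2 : K)) ^ m ≠ 0 := pow_ne_zero _ h2
    rw [hK] at hcard
    push_cast at hcard
    exact this hcard
  have hadd : ∀ a : K, a + a = 0 := fun a => by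
    have : (2 : K) * a = 0 := by rw [h2]; ring
    linear_combination this
  have hleft : ∀ x, S (G.symm (x + γ * f (G.symm x))) = x := by
    intro x
    rcases hfbool (G.symm x) with h0 | h1
    · rw [h0, mul_zero, add_zero, hS, G.apply_symm_apply, h0, mul_zero, add_zero]
    · rw [h1, mul_one]
      rcases hfbool (G.symm (x + γ)) with h0' | h1'
      · exfalso
        have e1 : S (G.symm (x + γ)) = x + γ := by
          rw [hS, G.apply_symm_apply, h0', mul_zero, add_zero]
        have e2 : S (G.symm x) = x + γ := by
          rw [hS, G.apply_symm_apply, h1, mul_one]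
        have := hSbij.1 (e1.trans e2.symm)
        have := G.symm.injective this
        exact hγ (by linear_combination this)
      · rw [hS, G.apply_symm_apply, h1', mul_one, add_assoc, hadd, add_zero]
  refine ⟨hleft, fun x => ?_⟩
  have := hleft (S x)
  exact G.symm.injective (by
    have h := hSbij.1 this
    -- h : G.symm (S x + γ * f (G.symm (S x))) = x
    simpa using hSbij.1 this)
end

section
/- Let m be a positive integer with gcd(m, 6) = 1, and let F(x) = a·x^(2^i) + b·x^(2^j) with a, b ∈ F_{2^m} both nonzero and 0 ≤ i < j < m. Then F cannot satisfy F(F(F(x))) = x for all x ∈ F_{2^m}; that is, F is never a triple cycle permutation polynomial of F_{2^m}. -/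
open Polynomial

theorem aux13 {K : Type} [Field K] [Fintype K] (c1 c2 c3 c4 : K) (n1 n2 n3 n4 : ℕ)
    (hc1 : c1 ≠ 0) (hn1 : n1 ≠ 0)
    (h12 : n1 ≠ n2) (h13 : n1 ≠ n3) (h14 : n1 ≠ n4)
    (hd1 : 2 ^ n1 < Fintype.card K) (hd2 : 2 ^ n2 < Fintype.card K)
    (hd3 : 2 ^ n3 < Fintype.card K) (hd4 : 2 ^ n4 < Fintype.card K)
    (heval : ∀ x : K, c1 * x ^ 2 ^ n1 + c2 * x ^ 2 ^ n2 + c3 * x ^ 2 ^ n3 + c4 * x ^ 2 ^ n4 = x) :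
    False := by
  set P : K[X] := C c1 * X ^ 2 ^ n1 + C c2 * X ^ 2 ^ n2 + C c3 * X ^ 2 ^ n3 + C c4 * X ^ 2 ^ n4 - X with hPdef
  have hdeg : P.natDegree < Fintype.card K := by
    refine lt_of_le_of_lt (natDegree_sub_le _ _) ?_
    simp only [max_lt_iff]
    constructor
    · refine lt_of_le_of_lt (natDegree_add_le _ _) ?_
      simp only [max_lt_iff]
      refine ⟨lt_of_le_of_lt (natDegree_add_le _ _) ?_, lt_of_le_of_lt (natDegree_C_mul_X_pow_le _ _) hd4⟩
      simp only [max_lt_iff]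
      refine ⟨lt_of_le_of_lt (natDegree_add_le _ _) ?_, lt_of_le_of_lt (natDegree_C_mul_X_pow_le _ _) hd3⟩
      simp only [max_lt_iff]
      exact ⟨lt_of_le_of_lt (natDegree_C_mul_X_pow_le _ _) hd1,
        lt_of_le_of_lt (natDegree_C_mul_X_pow_le _ _) hd2⟩
    · exact lt_of_le_of_lt natDegree_X_le (by
        calc 1 < 2 ^ n1 := Nat.one_lt_two_pow hn1
        _ < Fintype.card K := hd1)
  have hP0 : P = 0 := by
    apply eq_zero_of_natDegree_lt_card_of_eval_eq_zero P Function.injective_id _ (by simpa using hdeg)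
    intro x
    simp [hPdef, heval x]
  have hcoeff := congrArg (fun p => Polynomial.coeff p (2 ^ n1)) hP0
  have hpowinj : Function.Injective (fun n : ℕ => 2 ^ n) := Nat.pow_right_injective le_rfl
  have e2 : (2:ℕ) ^ n2 ≠ 2 ^ n1 := fun h => h12 (hpowinj h).symm
  have e3 : (2:ℕ) ^ n3 ≠ 2 ^ n1 := fun h => h13 (hpowinj h).symm
  have e4 : (2:ℕ) ^ n4 ≠ 2 ^ n1 := fun h => h14 (hpowinj h).symm
  have e1 : (2:ℕ) ^ n1 ≠ 1 := Nat.ne_of_gt (Nat.one_lt_two_pow hn1)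
  simp [hPdef, coeff_X, e2, e3, e4, Ne.symm e1, hc1, h12, h13, h14] at hcoeff

theorem stmt13 (m : ℕ) (hm : 0 < m) (hgcd : Nat.gcd m 6 = 1)
    (K : Type) [Field K] [Fintype K] (hK : Fintype.card K = 2 ^ m)
    (a b : K) (ha : a ≠ 0) (hb : b ≠ 0)
    (i j : ℕ) (hij : i < j) (hjm : j < m)
    (F : K → K) (hF : ∀ x, F x = a * x ^ 2 ^ i + b * x ^ 2 ^ j) :
    ¬ (∀ x, F (F (F x)) = x) := by
  intro h
  -- characteristic 2
  have hcard0 : ((Fintype.card K : ℕ) : K) = 0 := FiniteField.cast_card_eq_zero K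
  have h2 : (2 : K) = 0 := by
    rw [hK] at hcard0
    push_cast at hcard0
    exact pow_eq_zero_iff hm.ne' |>.mp hcard0
  haveI : CharP K 2 := by
    have hdvd : ringChar K ∣ 2 := ringChar.dvd (by exact_mod_cast h2)
    have hprime : (ringChar K).Prime := CharP.char_is_prime K (ringChar K)
    have : ringChar K = 2 := (Nat.prime_dvd_prime_iff_eq hprime Nat.prime_two).mp hdvd
    exact ringChar.eq_iff.mp this
  haveI : Fact (Nat.Prime 2) := ⟨Nat.prime_two⟩
  -- reduction of exponents
  have red : ∀ (x : K) (e : ℕ), x ^ 2 ^ e = x ^ 2 ^ (e % m) := by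
    intro x e
    conv_lhs => rw [← Nat.div_add_mod e m]
    rw [pow_add, pow_mul, pow_mul]
    congr 1
    rw [← hK]
    exact FiniteField.pow_card_pow _ x
  -- coefficients
  set c1 : K := a ^ (1 + 2 ^ i + 2 ^ i * 2 ^ i) with hc1
  set c4 : K := b ^ (1 + 2 ^ j + 2 ^ j * 2 ^ j) with hc4
  set c2 : K := a * (a * b ^ 2 ^ i + b * a ^ 2 ^ j) ^ 2 ^ i + b * (a ^ (1 + 2 ^ i)) ^ 2 ^ j with hc2
  set c3 : K := a * (b ^ (1 + 2 ^ j)) ^ 2 ^ i + b * (a * b ^ 2 ^ i + b * a ^ 2 ^ j) ^ 2 ^ j with hc3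
  have key : ∀ x : K, F (F (F x)) =
      c1 * x ^ (2 ^ i * 2 ^ i * 2 ^ i) + c2 * x ^ (2 ^ i * 2 ^ i * 2 ^ j)
        + c3 * x ^ (2 ^ i * 2 ^ j * 2 ^ j) + c4 * x ^ (2 ^ j * 2 ^ j * 2 ^ j) := by
    intro x
    simp only [hF, add_pow_char_pow, mul_pow, hc1, hc2, hc3, hc4]
    ring
  set e1 := 3 * i % m with he1
  set e2 := (2 * i + j) % m with he2
  set e3 := (i + 2 * j) % m with he3
  set e4 := 3 * j % m with he4
  have p1 : ∀ x : K, x ^ (2 ^ i * 2 ^ i * 2 ^ i) = x ^ 2 ^ e1 := by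
    intro x; rw [← pow_add, ← pow_add, show i + i + i = 3 * i by ring, red x (3 * i)]
  have p2 : ∀ x : K, x ^ (2 ^ i * 2 ^ i * 2 ^ j) = x ^ 2 ^ e2 := by
    intro x; rw [← pow_add, ← pow_add, show i + i + j = 2 * i + j by ring, red x (2 * i + j)]
  have p3 : ∀ x : K, x ^ (2 ^ i * 2 ^ j * 2 ^ j) = x ^ 2 ^ e3 := by
    intro x; rw [← pow_add, ← pow_add, show i + j + j = i + 2 * j by ring, red x (i + 2 * j)]
  have p4 : ∀ x : K, x ^ (2 ^ j * 2 ^ j * 2 ^ j) = x ^ 2 ^ e4 := by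
    intro x; rw [← pow_add, ← pow_add, show j + j + j = 3 * j by ring, red x (3 * j)]
  have key2 : ∀ x : K, c1 * x ^ 2 ^ e1 + c2 * x ^ 2 ^ e2 + c3 * x ^ 2 ^ e3 + c4 * x ^ 2 ^ e4 = x := by
    intro x
    rw [← p1, ← p2, ← p3, ← p4]
    exact (key x).symm.trans (h x)
  -- coprimality facts
  have hcop2 : Nat.Coprime m 2 := Nat.Coprime.coprime_dvd_right (by norm_num) hgcd
  have hcop3 : Nat.Coprime m 3 := Nat.Coprime.coprime_dvd_right (by norm_num) hgcd
  have hji : ¬ (m ∣ j - i) := by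
    intro hd
    have := Nat.le_of_dvd (Nat.sub_pos_of_lt hij) hd
    omega
  have hmod : ∀ u v : ℕ, u ≤ v → u % m = v % m → m ∣ v - u := by
    intro u v huv heq
    exact (Nat.modEq_iff_dvd' huv).mp heq
  have hdvd2 : ∀ k, m ∣ 2 * k → m ∣ k := by
    intro k hk; exact hcop2.dvd_of_dvd_mul_left hk
  have hdvd3 : ∀ k, m ∣ 3 * k → m ∣ k := by
    intro k hk; exact hcop3.dvd_of_dvd_mul_left hk
  have h12 : e1 ≠ e2 := fun hEq => hji (by
    have := hmod (3*i) (2*i+j) (by omega) hEq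
    have e : 2*i+j - 3*i = j - i := by omega
    rwa [e] at this)
  have h13 : e1 ≠ e3 := fun hEq => hji (by
    have := hmod (3*i) (i+2*j) (by omega) hEq
    have e : i+2*j - 3*i = 2*(j - i) := by omega
    rw [e] at this
    exact hdvd2 _ this)
  have h14 : e1 ≠ e4 := fun hEq => hji (by
    have := hmod (3*i) (3*j) (by omega) hEq
    have e : 3*j - 3*i = 3*(j - i) := by omega
    rw [e] at this
    exact hdvd3 _ this)
  have h42 : e4 ≠ e2 := fun hEq => hji (by
    have := hmod (2*i+j) (3*j) (by omega) hEq.symm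
    have e : 3*j - (2*i+j) = 2*(j - i) := by omega
    rw [e] at this
    exact hdvd2 _ this)
  have h43 : e4 ≠ e3 := fun hEq => hji (by
    have := hmod (i+2*j) (3*j) (by omega) hEq.symm
    have e : 3*j - (i+2*j) = j - i := by omega
    rwa [e] at this)
  have hb1 : 2 ^ e1 < Fintype.card K := by rw [hK]; exact Nat.pow_lt_pow_right one_lt_two (Nat.mod_lt _ hm)
  have hb2 : 2 ^ e2 < Fintype.card K := by rw [hK]; exact Nat.pow_lt_pow_right one_lt_two (Nat.mod_lt _ hm)
  have hb3 : 2 ^ e3 < Fintype.card K := by rw [hK]; exact Nat.pow_lt_pow_right one_lt_two (Nat.mod_lt _ hm)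
  have hb4 : 2 ^ e4 < Fintype.card K := by rw [hK]; exact Nat.pow_lt_pow_right one_lt_two (Nat.mod_lt _ hm)
  have hc1ne : c1 ≠ 0 := pow_ne_zero _ ha
  have hc4ne : c4 ≠ 0 := pow_ne_zero _ hb
  by_cases hz : e1 = 0
  · have hz4 : e4 ≠ 0 := fun h0 => h14 (hz.trans h0.symm)
    exact aux13 c4 c2 c3 c1 e4 e2 e3 e1 hc4ne hz4 h42 h43 (Ne.symm h14) hb4 hb2 hb3 hb1
      (fun x => by linear_combination key2 x)
  · exact aux13 c1 c2 c3 c4 e1 e2 e3 e4 hc1ne hz h12 h13 h14 hb1 hb2 hb3 hb4 key2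
end

section
/- Let q be a prime power, m a positive integer, L(x) ∈ F_{q^m}[x] a q-linearized n-cycle permutation polynomial of F_{q^m}, h(x) ∈ F_q[x], γ ∈ F_q nonzero, and F(x) = L(x) + γ·h(Tr_{q^m/q}(x)) with Tr_{q^m/q} ∘ F = F̄ ∘ Tr_{q^m/q} where F̄(x) = L(x) + Tr_{q^m/q}(γ)·h(x). Then for every k ≥ 1 and every x ∈ F_{q^m}: F^(k)(x) = L^(k)(x) + γ·∑_{i=0}^{k−1} L^(i)(h(F̄^(k−1−i)(Tr_{q^m/q}(x)))). -/
theorem stmt15 (q m n : ℕ) (hq : ∃ p s : ℕ, p.Prime ∧ 0 < s ∧ q = p ^ s)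
    (hm : 0 < m) (hn : 0 < n)
    (K : Type) [Field K] [Fintype K] (hK : Fintype.card K = q ^ m)
    (a : ℕ → K) (L : K → K) (hL : ∀ x, L x = ∑ i ∈ Finset.range m, a i * x ^ q ^ i)
    (hLcyc : ∀ x, L^[n] x = x)
    (h : Polynomial K) (hh : ∀ i, (h.coeff i) ^ q = h.coeff i)
    (γ : K) (hγ : γ ≠ 0) (hγq : γ ^ q = γ)
    (Tr : K → K) (hTr : ∀ x, Tr x = ∑ i ∈ Finset.range m, x ^ q ^ i)
    (F Fbar : K → K)
    (hF : ∀ x, F x = L x + γ * h.eval (Tr x))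
    (hFbar : ∀ x, Fbar x = L x + Tr γ * h.eval x)
    (hcomm : ∀ x, Tr (F x) = Fbar (Tr x)) :
    ∀ k : ℕ, 1 ≤ k → ∀ x : K,
      F^[k] x = L^[k] x +
        γ * ∑ i ∈ Finset.range k, L^[i] (h.eval (Fbar^[k - 1 - i] (Tr x))) := by
  obtain ⟨p, s, hp, hs, rfl⟩ := hq
  -- characteristic of K is p
  set r := ringChar K with hr
  have hrp : r.Prime := CharP.char_is_prime K r
  obtain ⟨nn, hnp, hcard⟩ := FiniteField.card K r
  have hpr : p = r := by
    have : r ∣ (p ^ s) ^ m := by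
      rw [← hK, hcard]
      exact dvd_pow_self r (by positivity)
    rw [← pow_mul] at this
    have := hrp.dvd_of_dvd_pow this
    exact ((Nat.prime_dvd_prime_iff_eq hrp hp).mp this).symm
  haveI : Fact p.Prime := ⟨hp⟩
  haveI hcharp : CharP K p := hpr ▸ ringChar.charP K
  -- Frobenius additivity
  have hq_add : ∀ (i : ℕ) (x y : K), (x + y) ^ (p ^ s) ^ i = x ^ (p ^ s) ^ i + y ^ (p ^ s) ^ i := by
    intro i x y
    rw [← pow_mul, add_pow_char_pow]
  -- γ is fixed by all q-power Frobenii
  have hγpow : ∀ i : ℕ, γ ^ (p ^ s) ^ i = γ := by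
    intro i
    induction i with
    | zero => simp
    | succ i ih => rw [pow_succ, pow_mul, ih, hγq]
  have Ladd : ∀ x y : K, L (x + y) = L x + L y := by
    intro x y
    simp [hL, hq_add, mul_add, Finset.sum_add_distrib]
  have Lsmul : ∀ x : K, L (γ * x) = γ * L x := by
    intro x
    rw [hL, hL, Finset.mul_sum]
    refine Finset.sum_congr rfl fun i _ => ?_
    rw [mul_pow, hγpow]
    ring
  have Lsum : ∀ (t : Finset ℕ) (f : ℕ → K),
      L (∑ i ∈ t, f i) = ∑ i ∈ t, L (f i) :=
    fun t f => map_sum (AddMonoidHom.mk' L Ladd) f t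
  have hsemi : ∀ (k : ℕ) (x : K), Tr (F^[k] x) = Fbar^[k] (Tr x) := by
    intro k
    exact (Function.Semiconj.iterate_right hcomm k)
  intro k hk
  induction k with
  | zero => omega
  | succ k ih =>
    intro x
    rcases Nat.eq_zero_or_pos k with rfl | hk'
    · simp [hF]
    · have IH := ih hk' x
      rw [Function.iterate_succ_apply', hF, hsemi, IH, Ladd, Lsmul, Lsum]
      rw [Function.iterate_succ_apply' L k x]
      have hsum : ∑ i ∈ Finset.range (k + 1),
          L^[i] (h.eval (Fbar^[k + 1 - 1 - i] (Tr x)))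
          = ∑ i ∈ Finset.range k, L^[i + 1] (h.eval (Fbar^[k - 1 - i] (Tr x)))
            + h.eval (Fbar^[k] (Tr x)) := by
        rw [Finset.sum_range_succ']
        congr 1
        · refine Finset.sum_congr rfl fun i hi => ?_
          simp only [Finset.mem_range] at hi
          have he : k + 1 - 1 - (i + 1) = k - 1 - i := by omega
          rw [he]
      rw [hsum, mul_add]
      have : ∀ i : ℕ, L (L^[i] (h.eval (Fbar^[k - 1 - i] (Tr x))))
          = L^[i + 1] (h.eval (Fbar^[k - 1 - i] (Tr x))) := by
        intro i; rw [Function.iterate_succ_apply']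
      simp only [this]
      ring
end
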